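/- arXiv:2401.13710 — 5 statements merged into one kernel-verified Lean document; each statement's English description precedes it below -/
import Mathlib

section
/- Let L be a split regular Hom-Lie superalgebra with maximal abelian graded subalgebra H and root system Λ. Then the root space associated to the zero functional equals H, i.e., L_0 = H. -/
/-- The super sign `(-1)^{ij}` for `i j : ZMod 2`, valued in a field `K`. -/
def ssign (K : Type*) [Field K] (i j : ZMod 2) : K :=
  if i = 1 ∧ j = 1 then -1 else 1

/-- A split regular Hom-Lie superalgebra over a field `K`:
a `ZMod 2`-graded vector space `L` with a bilinear bracket and an even
automorphism `φ` satisfying skew-supersymmetry and the super Hom-Jacobi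
identity, together with a maximal abelian graded subalgebra `H`
(with respect to which `L` will be split). -/
structure SplitRegularHomLieSuperalgebra (K L : Type*) [Field K]
    [AddCommGroup L] [Module K L] where
  bracket : L →ₗ[K] L →ₗ[K] L
  φ : L ≃ₗ[K] L
  Lg : ZMod 2 → Submodule K L
  grading_sup : Lg 0 ⊔ Lg 1 = ⊤
  grading_disjoint : Lg 0 ⊓ Lg 1 = ⊥
  φ_even : ∀ i, Submodule.map (φ : L →ₗ[K] L) (Lg i) = Lg i
  φ_bracket : ∀ x y, φ (bracket x y) = bracket (φ x) (φ y)
  skew : ∀ (i j : ZMod 2), ∀ x ∈ Lg i, ∀ y ∈ Lg j,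
    bracket x y = -(ssign K i j) • bracket y x
  jacobi : ∀ (i j k : ZMod 2), ∀ x ∈ Lg i, ∀ y ∈ Lg j, ∀ z ∈ Lg k,
    ssign K i k • bracket (bracket x y) (φ z)
      + ssign K i j • bracket (bracket y z) (φ x)
      + ssign K j k • bracket (bracket z x) (φ y) = 0
  H : Submodule K L
  H_graded : H = (H ⊓ Lg 0) ⊔ (H ⊓ Lg 1)
  H_abelian : ∀ x ∈ H, ∀ y ∈ H, bracket x y = 0
  φ_H : Submodule.map (φ : L →ₗ[K] L) H = H
  H_max : ∀ A : Submodule K L, (A = (A ⊓ Lg 0) ⊔ (A ⊓ Lg 1)) →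
    (∀ x ∈ A, ∀ y ∈ A, bracket x y = 0) →
    Submodule.map (φ : L →ₗ[K] L) A = A → H ≤ A → A = H
  /-- the restriction of `φ` to `H₀ = H ⊓ L₀` as a linear automorphism -/
  φH0 : ↥(H ⊓ Lg 0) ≃ₗ[K] ↥(H ⊓ Lg 0)
  φH0_coe : ∀ h : ↥(H ⊓ Lg 0), (φH0 h : L) = φ (h : L)

namespace SplitRegularHomLieSuperalgebra

variable {K L : Type*} [Field K] [AddCommGroup L] [Module K L]
variable (D : SplitRegularHomLieSuperalgebra K L)

/-- The even part `H₀` of `H`. -/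
abbrev H0 : Submodule K L := D.H ⊓ D.Lg 0

/-- The root space associated to a linear functional `α : H₀ → K`. -/
def rootSpace (α : ↥D.H0 →ₗ[K] K) : Submodule K L where
  carrier := {v | ∀ h : ↥D.H0, D.bracket h v = α h • D.φ v}
  add_mem' := by
    intro a b ha hb h
    simp only [map_add, ha h, hb h, smul_add]
  zero_mem' := by
    intro h
    simp
  smul_mem' := by
    intro c x hx h
    simp only [map_smul, hx h, smul_comm c (α h)]

/-- The root system: the set of nonzero functionals with nonzero root space. -/
def Λ : Set (↥D.H0 →ₗ[K] K) := {α | α ≠ 0 ∧ D.rootSpace α ≠ ⊥}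

/-- The twist `α ∘ φ^z` of a functional by an integer power of `φ` (restricted
to `H₀`). -/
def twist (α : ↥D.H0 →ₗ[K] K) (z : ℤ) : ↥D.H0 →ₗ[K] K :=
  α.comp ((D.φH0 ^ z : ↥D.H0 ≃ₗ[K] ↥D.H0) : ↥D.H0 →ₗ[K] ↥D.H0)

/-- The subspace spanned by all brackets `[a,b]` with `a ∈ A`, `b ∈ B`. -/
def bracketSpan (A B : Submodule K L) : Submodule K L :=
  Submodule.span K {z | ∃ a ∈ A, ∃ b ∈ B, z = D.bracket a b}

/-- `±Λ = Λ ∪ (−Λ)`. -/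
def pmΛ : Set (↥D.H0 →ₗ[K] K) := {γ | γ ∈ D.Λ ∨ -γ ∈ D.Λ}

/-- The partial sums appearing in the definition of a connection:
`theta a 0 = a 0` and `theta a (i+1) = (theta a i + a (i+1)) ∘ φ⁻¹`. -/
def theta (a : ℕ → (↥D.H0 →ₗ[K] K)) : ℕ → (↥D.H0 →ₗ[K] K)
  | 0 => a 0
  | i + 1 => D.twist (theta a i + a (i + 1)) (-1)

/-- `α` is connected to `β`. -/
def Connected (α β : ↥D.H0 →ₗ[K] K) : Prop :=
  ∃ (k : ℕ) (a : ℕ → (↥D.H0 →ₗ[K] K)), 1 ≤ k ∧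
    (∀ i < k, a i ∈ D.pmΛ) ∧
    (∃ n : ℕ, a 0 = D.twist α (-(n : ℤ))) ∧
    (∀ i, 1 ≤ i → i + 1 ≤ k - 1 → D.theta a i ∈ D.pmΛ) ∧
    (∃ m : ℕ, D.theta a (k - 1) = D.twist β (-(m : ℤ)) ∨
              D.theta a (k - 1) = -(D.twist β (-(m : ℤ))))

/-- The connection class `[α]` of a root `α`. -/
def rootClass (α : ↥D.H0 →ₗ[K] K) : Set (↥D.H0 →ₗ[K] K) :=
  {β ∈ D.Λ | D.Connected α β}

/-- `H_{[α]} = span {[L_β, L_{−β}] : β ∈ [α]}`. -/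
def Hclass (α : ↥D.H0 →ₗ[K] K) : Submodule K L :=
  ⨆ β ∈ D.rootClass α, D.bracketSpan (D.rootSpace β) (D.rootSpace (-β))

/-- `V_{[α]} = ⊕_{β ∈ [α]} L_β`. -/
def Vclass (α : ↥D.H0 →ₗ[K] K) : Submodule K L :=
  ⨆ β ∈ D.rootClass α, D.rootSpace β

/-- `L_{[α]} = H_{[α]} ⊕ V_{[α]}`. -/
def Lclass (α : ↥D.H0 →ₗ[K] K) : Submodule K L :=
  D.Hclass α ⊔ D.Vclass α

/-- The center `Z(L) = {v : [v, L] = 0}`. -/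
def center : Submodule K L where
  carrier := {v | ∀ y : L, D.bracket v y = 0}
  add_mem' := by
    intro a b ha hb y
    simp only [map_add, LinearMap.add_apply, ha y, hb y, add_zero]
  zero_mem' := by
    intro y
    simp
  smul_mem' := by
    intro c x hx y
    simp only [map_smul, LinearMap.smul_apply, hx y, smul_zero]

/-- An ideal: a graded, `φ`-invariant subspace `I` with `[I,L] ⊆ I`. -/
def IsIdeal (I : Submodule K L) : Prop :=
  (I = (I ⊓ D.Lg 0) ⊔ (I ⊓ D.Lg 1)) ∧
  (∀ x ∈ I, ∀ y : L, D.bracket x y ∈ I) ∧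
  Submodule.map (D.φ : L →ₗ[K] L) I = I

/-- Simplicity: `[L,L] ≠ 0` and the only ideals are `0` and `L`. -/
def IsSimple : Prop :=
  (¬ ∀ x y : L, D.bracket x y = 0) ∧
  ∀ I : Submodule K L, D.IsIdeal I → I = ⊥ ∨ I = ⊤

end SplitRegularHomLieSuperalgebra

/-- The split condition: `L = H ⊕ (⊕_{α ∈ Λ} L_α)` as an internal direct sum. -/
structure IsSplitDecomposition {K L : Type*} [Field K] [AddCommGroup L]
    [Module K L] (D : SplitRegularHomLieSuperalgebra K L) : Prop where
  sup_eq_top : D.H ⊔ (⨆ α ∈ D.Λ, D.rootSpace α) = ⊤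
  disjoint_H : Disjoint D.H (⨆ α ∈ D.Λ, D.rootSpace α)
  disjoint_root : ∀ α ∈ D.Λ, Disjoint (D.rootSpace α)
    (D.H ⊔ ⨆ β ∈ {β ∈ D.Λ | β ≠ α}, D.rootSpace β)

/-- the zero root space equals `H`. -/
theorem stmt_0 {K L : Type*} [Field K] [AddCommGroup L] [Module K L]
    (D : SplitRegularHomLieSuperalgebra K L) (hsplit : IsSplitDecomposition D) :
    D.rootSpace 0 = D.H := by
  classical
  have hH0 : D.H ≤ D.rootSpace 0 := by
    intro v hv
    intro h
    have hb : D.bracket (h : L) v = 0 := D.H_abelian _ h.2.1 _ hv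
    simp [hb]
  refine le_antisymm ?_ hH0
  -- independence of root spaces
  have indep : ∀ (s : Finset ↥D.Λ) (g : ↥D.Λ → L),
      (∀ i ∈ s, g i ∈ D.rootSpace i.1) → ∑ i ∈ s, g i = 0 → ∀ i ∈ s, g i = 0 := by
    intro s g hg hsum i hi
    have h1 : g i = -∑ j ∈ s.erase i, g j := by
      rw [← Finset.insert_erase hi, Finset.sum_insert (Finset.notMem_erase i s)] at hsum
      exact eq_neg_of_add_eq_zero_left hsum
    have h2 : (∑ j ∈ s.erase i, g j) ∈ ⨆ β ∈ {β ∈ D.Λ | β ≠ i.1}, D.rootSpace β := by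
      apply Submodule.sum_mem
      intro j hj
      have hjmem : j.1 ∈ {β ∈ D.Λ | β ≠ i.1} :=
        ⟨j.2, fun h => (Finset.ne_of_mem_erase hj) (Subtype.ext h)⟩
      exact Submodule.mem_iSup_of_mem j.1 (Submodule.mem_iSup_of_mem hjmem
        (hg j (Finset.mem_of_mem_erase hj)))
    have h4 : g i ∈ D.H ⊔ ⨆ β ∈ {β ∈ D.Λ | β ≠ i.1}, D.rootSpace β := by
      rw [h1]
      exact Submodule.neg_mem _ (Submodule.mem_sup_right h2)
    exact (Submodule.disjoint_def.mp (hsplit.disjoint_root i.1 i.2)) _ (hg i hi) h4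
  intro v hv
  have hvtop : v ∈ D.H ⊔ (⨆ α ∈ D.Λ, D.rootSpace α) := by
    rw [hsplit.sup_eq_top]; exact Submodule.mem_top
  obtain ⟨a, ha, w, hw, hvw⟩ := Submodule.mem_sup.mp hvtop
  have hw0 : w ∈ D.rootSpace 0 := by
    have hwe : w = v - a := by rw [← hvw]; abel
    rw [hwe]
    exact Submodule.sub_mem _ hv (hH0 ha)
  have hw' : w ∈ ⨆ (α : ↥D.Λ), D.rootSpace α.1 := by
    rwa [iSup_subtype'] at hw
  obtain ⟨f, hf, hfs⟩ := (Submodule.mem_iSup_iff_exists_finsupp _ _).mp hw'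
  have hfsum : ∑ i ∈ f.support, f i = w := hfs
  have key : ∀ h : ↥D.H0, ∑ i ∈ f.support, i.1 h • f i = 0 := by
    intro h
    apply D.φ.injective
    rw [map_zero, map_sum]
    have hbw : D.bracket (h : L) w = 0 := by
      have := hw0 h
      simpa using this
    calc ∑ i ∈ f.support, D.φ (i.1 h • f i)
        = ∑ i ∈ f.support, D.bracket (h : L) (f i) := by
          refine Finset.sum_congr rfl fun i _ => ?_
          rw [hf i h, map_smul]
      _ = D.bracket (h : L) (∑ i ∈ f.support, f i) := (map_sum _ _ _).symm
      _ = 0 := by rw [hfsum, hbw]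
  have hsupp : f.support = ∅ := by
    by_contra hne
    obtain ⟨i, hi⟩ := Finset.nonempty_iff_ne_empty.mpr hne
    have hine : (i.1 : ↥D.H0 →ₗ[K] K) ≠ 0 := i.2.1
    obtain ⟨h, hh⟩ : ∃ h : ↥D.H0, i.1 h ≠ 0 := by
      by_contra hc
      push_neg at hc
      exact hine (LinearMap.ext fun x => hc x)
    have := indep f.support (fun j => j.1 h • f j)
      (fun j _ => Submodule.smul_mem _ _ (hf j)) (key h) i hi
    have hfi : f i = 0 := by
      rcases smul_eq_zero.mp this with h' | h'
      · exact absurd h' hh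
      · exact h'
    exact Finsupp.mem_support_iff.mp hi hfi
  have hw00 : w = 0 := by rw [← hfsum, hsupp, Finset.sum_empty]
  rw [← hvw, hw00, add_zero]
  exact ha
end

section
/- Let L be a split regular Hom-Lie superalgebra with automorphism φ and root system Λ. For any α ∈ Λ ∪ {0}, if φ^{-1}(L_α) ≠ 0 then α∘φ ∈ Λ ∪ {0} and φ^{-1}(L_α) = L_{α∘φ}. -/
lemma mem_rootSpace_iff {K L : Type*} [Field K] [AddCommGroup L] [Module K L]
    (D : SplitRegularHomLieSuperalgebra K L) (β : ↥D.H0 →ₗ[K] K) (v : L) :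
    v ∈ D.rootSpace β ↔ ∀ h : ↥D.H0, D.bracket h v = β h • D.φ v := Iff.rfl

lemma twist_one_apply {K L : Type*} [Field K] [AddCommGroup L] [Module K L]
    (D : SplitRegularHomLieSuperalgebra K L) (α : ↥D.H0 →ₗ[K] K) (h : ↥D.H0) :
    D.twist α 1 h = α (D.φH0 h) := by
  simp [SplitRegularHomLieSuperalgebra.twist, zpow_one]

lemma map_symm_rootSpace {K L : Type*} [Field K] [AddCommGroup L] [Module K L]
    (D : SplitRegularHomLieSuperalgebra K L) (α : ↥D.H0 →ₗ[K] K) :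
    Submodule.map (D.φ.symm : L →ₗ[K] L) (D.rootSpace α)
      = D.rootSpace (D.twist α 1) := by
  ext v
  simp only [Submodule.mem_map, LinearEquiv.coe_coe]
  constructor
  · rintro ⟨w, hw, rfl⟩
    rw [mem_rootSpace_iff]
    intro h
    apply D.φ.injective
    rw [D.φ_bracket, map_smul, D.φ.apply_symm_apply, twist_one_apply]
    have := hw (D.φH0 h)
    rwa [D.φH0_coe] at this
  · intro hv
    refine ⟨D.φ v, ?_, D.φ.symm_apply_apply v⟩
    rw [mem_rootSpace_iff]
    intro h
    have hg : (h : L) = D.φ ((D.φH0.symm h : ↥D.H0) : L) := by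
      rw [← D.φH0_coe, D.φH0.apply_symm_apply]
    have := hv (D.φH0.symm h)
    rw [twist_one_apply, D.φH0.apply_symm_apply] at this
    rw [hg, ← D.φ_bracket, this, map_smul]

/-- if `φ⁻¹(L_α) ≠ 0` then `α∘φ ∈ Λ ∪ {0}` and `φ⁻¹(L_α) = L_{α∘φ}`. -/
theorem stmt_3 {K L : Type*} [Field K] [AddCommGroup L] [Module K L]
    (D : SplitRegularHomLieSuperalgebra K L) (hsplit : IsSplitDecomposition D)
    (α : ↥D.H0 →ₗ[K] K) (hα : α = 0 ∨ α ∈ D.Λ)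
    (h : Submodule.map (D.φ.symm : L →ₗ[K] L) (D.rootSpace α) ≠ ⊥) :
    (D.twist α 1 = 0 ∨ D.twist α 1 ∈ D.Λ) ∧
    Submodule.map (D.φ.symm : L →ₗ[K] L) (D.rootSpace α) = D.rootSpace (D.twist α 1) := by
  have key := map_symm_rootSpace D α
  refine ⟨?_, key⟩
  by_cases h0 : D.twist α 1 = 0
  · exact Or.inl h0
  · exact Or.inr ⟨h0, by rw [← key]; exact h⟩
end

section
/- Let L be a split regular Hom-Lie superalgebra with automorphism φ and root system Λ. If α ∈ Λ, then α∘φ^z ∈ Λ for every integer z. -/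
/-!
`φ` commutes with the bracket and restricts to an automorphism of `H₀`, so it carries `L_α`
isomorphically onto `L_{α∘φ⁻¹}`. Hence `α ∈ Λ ↔ α∘φ⁻¹ ∈ Λ`, and induction on `z` gives all twists.
-/

namespace SplitRegularHomLieSuperalgebra

variable {K L : Type*} [Field K] [AddCommGroup L] [Module K L]
variable (D : SplitRegularHomLieSuperalgebra K L)

lemma twist_twist (α : ↥D.H0 →ₗ[K] K) (z w : ℤ) :
    D.twist (D.twist α z) w = D.twist α (z + w) := by
  ext h
  simp only [twist, LinearMap.comp_apply, LinearEquiv.coe_coe]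
  rw [zpow_add]
  rfl

lemma twist_zero (α : ↥D.H0 →ₗ[K] K) : D.twist α 0 = α := by
  ext h; simp [twist]

lemma twist_eq_zero_iff {α : ↥D.H0 →ₗ[K] K} {z : ℤ} : D.twist α z = 0 ↔ α = 0 := by
  refine ⟨fun h0 => ?_, fun h0 => by simp [twist, h0]⟩
  ext h
  simpa [twist] using LinearMap.congr_fun h0 ((D.φH0 ^ z).symm h)

lemma twist_neg_one_apply_φH0 (α : ↥D.H0 →ₗ[K] K) (g : ↥D.H0) :
    D.twist α (-1) (D.φH0 g) = α g := by
  simp [twist]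

lemma φ_mem_rootSpace_twist_neg_one_iff {α : ↥D.H0 →ₗ[K] K} {v : L} :
    D.φ v ∈ D.rootSpace (D.twist α (-1)) ↔ v ∈ D.rootSpace α := by
  change (∀ h, _) ↔ ∀ g, _
  rw [← D.φH0.toEquiv.forall_congr_right]
  refine forall_congr' fun g => ?_
  rw [LinearEquiv.coe_toEquiv, D.φH0_coe, ← D.φ_bracket, twist_neg_one_apply_φH0, ← map_smul,
    D.φ.injective.eq_iff]

lemma rootSpace_twist_neg_one (α : ↥D.H0 →ₗ[K] K) :
    D.rootSpace (D.twist α (-1)) = (D.rootSpace α).map (D.φ : L →ₗ[K] L) := by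
  ext v
  rw [Submodule.mem_map_equiv, ← D.φ_mem_rootSpace_twist_neg_one_iff (v := D.φ.symm v),
    D.φ.apply_symm_apply]

lemma twist_neg_one_mem_Λ_iff {α : ↥D.H0 →ₗ[K] K} : D.twist α (-1) ∈ D.Λ ↔ α ∈ D.Λ := by
  simp only [Λ, Set.mem_ofPred_eq, ne_eq, rootSpace_twist_neg_one, twist_eq_zero_iff,
    Submodule.map_eq_bot_iff]

end SplitRegularHomLieSuperalgebra

theorem stmt_5_general {K L : Type*} [Field K] [AddCommGroup L] [Module K L]
    (D : SplitRegularHomLieSuperalgebra K L)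
    (α : ↥D.H0 →ₗ[K] K) (hα : α ∈ D.Λ) :
    ∀ z : ℤ, D.twist α z ∈ D.Λ := by
  intro z
  induction z using Int.induction_on with
  | zero => rwa [D.twist_zero]
  | succ i ih =>
      rwa [← D.twist_neg_one_mem_Λ_iff, D.twist_twist, add_neg_cancel_right]
  | pred i ih =>
      rwa [sub_eq_add_neg, ← D.twist_twist, D.twist_neg_one_mem_Λ_iff]

/-- if `α ∈ Λ` then `α∘φ^z ∈ Λ` for every integer `z`. -/
theorem stmt_5 {K L : Type*} [Field K] [AddCommGroup L] [Module K L]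
    (D : SplitRegularHomLieSuperalgebra K L) (hsplit : IsSplitDecomposition D)
    (α : ↥D.H0 →ₗ[K] K) (hα : α ∈ D.Λ) :
    ∀ z : ℤ, D.twist α z ∈ D.Λ :=
  stmt_5_general D α hα
end

section
/- Let L be a split regular Hom-Lie superalgebra and I an ideal of L contained in H. Then I ⊆ Z(L), the center of L. -/
namespace SplitRegularHomLieSuperalgebraAux

open SplitRegularHomLieSuperalgebra

variable {K L : Type*} [Field K] [AddCommGroup L] [Module K L]
variable (D : SplitRegularHomLieSuperalgebra K L)

lemma ssign_zero_left (j : ZMod 2) : ssign K 0 j = 1 := by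
  unfold ssign
  rw [if_neg]
  rintro ⟨h, -⟩
  exact absurd h (by decide)

lemma mem_rootSpace {α : ↥D.H0 →ₗ[K] K} {v : L} (hv : v ∈ D.rootSpace α)
    (h : ↥D.H0) : D.bracket (h : L) v = α h • D.φ v := hv h

lemma phi_mem_H (h : L) (hh : h ∈ D.H) : D.φ h ∈ D.H := by
  rw [← D.φ_H]
  exact ⟨h, hh, rfl⟩

/-- Key claim: for a root `α ∈ Λ`, `v ∈ L_α`, and a graded element `xp` of an
ideal `I ⊆ H`, we have `[v, xp] = 0`. -/
lemma bracket_root_graded_ideal (I : Submodule K L) (hI : D.IsIdeal I)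
    (hIH : I ≤ D.H) {α : ↥D.H0 →ₗ[K] K} (hα : α ∈ D.Λ) {v : L}
    (hv : v ∈ D.rootSpace α) {p : ZMod 2} {xp : L} (hxI : xp ∈ I)
    (hxg : xp ∈ D.Lg p) : D.bracket v xp = 0 := by
  -- choose h' with α h' ≠ 0
  obtain ⟨h', hne⟩ : ∃ h' : ↥D.H0, α h' ≠ 0 := by
    by_contra hcon
    push_neg at hcon
    exact hα.1 (LinearMap.ext fun h => by simpa using hcon h)
  have hxH : xp ∈ D.H := hIH hxI
  have hh'H : (h' : L) ∈ D.H := h'.2.1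
  have hh'0 : (h' : L) ∈ D.Lg 0 := h'.2.2
  -- each graded component produces a vanishing double bracket
  have hk : ∀ k : ZMod 2, ∀ w ∈ D.Lg k,
      D.bracket (D.bracket (h' : L) w) (D.φ xp) = 0 := by
    intro k w hw
    have hj := D.jacobi 0 k p (h' : L) hh'0 w hw xp hxg
    have hxh : D.bracket xp (h' : L) = 0 := D.H_abelian xp hxH (h' : L) hh'H
    have hwx : D.bracket w xp ∈ D.H := by
      apply hIH
      rw [D.skew k p w hw xp hxg]
      exact Submodule.smul_mem _ _ (hI.2.1 xp hxI w)
    have hB : D.bracket (D.bracket w xp) (D.φ (h' : L)) = 0 :=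
      D.H_abelian _ hwx _ (phi_mem_H D _ hh'H)
    rw [ssign_zero_left, ssign_zero_left, hxh, hB] at hj
    simpa using hj
  -- v = v₀ + v₁
  have hvtop : v ∈ D.Lg 0 ⊔ D.Lg 1 := by rw [D.grading_sup]; exact trivial
  obtain ⟨v0, hv0, v1, hv1, hveq⟩ := Submodule.mem_sup.mp hvtop
  have hsum : D.bracket (D.bracket (h' : L) v) (D.φ xp) = 0 := by
    rw [← hveq]
    simp only [map_add, LinearMap.add_apply, hk 0 v0 hv0, hk 1 v1 hv1, add_zero]
  rw [mem_rootSpace D hv h'] at hsum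
  simp only [map_smul, LinearMap.smul_apply] at hsum
  rw [← D.φ_bracket v xp] at hsum
  have := (smul_eq_zero.mp hsum).resolve_left hne
  simpa using (D.φ.map_eq_zero_iff).mp this

/-- For any `x` in an ideal `I ⊆ H` and any `y : L`, `[y, x] = 0`. -/
lemma bracket_left_ideal (hsplit : IsSplitDecomposition D)
    (I : Submodule K L) (hI : D.IsIdeal I) (hIH : I ≤ D.H)
    {x : L} (hx : x ∈ I) (y : L) : D.bracket y x = 0 := by
  -- decompose x into graded components in I
  have hx' : x ∈ (I ⊓ D.Lg 0) ⊔ (I ⊓ D.Lg 1) := by rw [← hI.1]; exact hx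
  obtain ⟨x0, hx0, x1, hx1, hxeq⟩ := Submodule.mem_sup.mp hx'
  -- the set of y with [y, x'] = 0 for graded x' ∈ I is a submodule containing H
  -- and every root space
  have key : ∀ (p : ZMod 2) (xp : L), xp ∈ I → xp ∈ D.Lg p →
      D.bracket y xp = 0 := by
    intro p xp hxpI hxpg
    have hy : y ∈ LinearMap.ker (D.bracket.flip xp) := by
      have htop : (⊤ : Submodule K L) ≤ LinearMap.ker (D.bracket.flip xp) := by
        rw [← hsplit.sup_eq_top]
        apply sup_le
        · intro h hh
          simp only [LinearMap.mem_ker, LinearMap.flip_apply]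
          exact D.H_abelian h hh xp (hIH hxpI)
        · apply iSup_le
          intro α
          apply iSup_le
          intro hα v hvα
          simp only [LinearMap.mem_ker, LinearMap.flip_apply]
          exact bracket_root_graded_ideal D I hI hIH hα hvα hxpI hxpg
      exact htop trivial
    simpa using hy
  rw [← hxeq]
  simp only [map_add, key 0 x0 hx0.1 hx0.2, key 1 x1 hx1.1 hx1.2, add_zero]

end SplitRegularHomLieSuperalgebraAux

/-- an ideal of `L` contained in `H` lies in the center `Z(L)`. -/
theorem stmt_16 {K L : Type*} [Field K] [AddCommGroup L] [Module K L]
    (D : SplitRegularHomLieSuperalgebra K L) (hsplit : IsSplitDecomposition D)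
    (hsym : ∀ α ∈ D.Λ, -α ∈ D.Λ)
    (I : Submodule K L) (hI : D.IsIdeal I) (hIH : I ≤ D.H) :
    I ≤ D.center := by
  intro x hx
  intro y
  -- decompose x and y into graded components
  have hx' : x ∈ (I ⊓ D.Lg 0) ⊔ (I ⊓ D.Lg 1) := by rw [← hI.1]; exact hx
  obtain ⟨x0, hx0, x1, hx1, hxeq⟩ := Submodule.mem_sup.mp hx'
  have hy' : y ∈ D.Lg 0 ⊔ D.Lg 1 := by rw [D.grading_sup]; exact trivial
  obtain ⟨y0, hy0, y1, hy1, hyeq⟩ := Submodule.mem_sup.mp hy'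
  have key : ∀ (p : ZMod 2) (xp : L), xp ∈ I → xp ∈ D.Lg p →
      ∀ (k : ZMod 2) (yk : L), yk ∈ D.Lg k → D.bracket xp yk = 0 := by
    intro p xp hxpI hxpg k yk hykg
    rw [D.skew p k xp hxpg yk hykg,
      SplitRegularHomLieSuperalgebraAux.bracket_left_ideal D hsplit I hI hIH
        hxpI yk]
    simp
  rw [← hxeq, ← hyeq]
  simp only [map_add, LinearMap.add_apply,
    key 0 x0 hx0.1 hx0.2 0 y0 hy0, key 0 x0 hx0.1 hx0.2 1 y1 hy1,
    key 1 x1 hx1.1 hx1.2 0 y0 hy0, key 1 x1 hx1.1 hx1.2 1 y1 hy1, add_zero]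
end

section
/- Let L be a split regular Hom-Lie superalgebra and I an ideal of L. If x = h + Σ_{j=1}^n v_{α_j} ∈ I, with h ∈ H, v_{α_j} ∈ L_{α_j}, α_j ∈ Λ pairwise distinct, then v_{α_j} ∈ I for every j. -/
namespace SplitRegularHomLieSuperalgebra

variable {K L : Type*} [Field K] [AddCommGroup L] [Module K L]
variable (D : SplitRegularHomLieSuperalgebra K L)

lemma mem_rootSpace_iff {α : ↥D.H0 →ₗ[K] K} {v : L} :
    v ∈ D.rootSpace α ↔ ∀ h : ↥D.H0, D.bracket h v = α h • D.φ v := Iff.rfl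

lemma phi_mem_of_mem {I : Submodule K L} (hI : D.IsIdeal I) {w : L} (hw : w ∈ I) :
    D.φ w ∈ I := by
  rw [← hI.2.2]; exact ⟨w, hw, rfl⟩

lemma mem_of_phi_mem {I : Submodule K L} (hI : D.IsIdeal I) {w : L} (hw : D.φ w ∈ I) :
    w ∈ I := by
  rw [← hI.2.2] at hw
  obtain ⟨u, hu, huw⟩ := hw
  have : u = w := D.φ.injective huw
  exact this ▸ hu

lemma bracket_swap_Lg0 {z : L} (hz : z ∈ D.Lg 0) (x : L) :
    D.bracket z x = - D.bracket x z := by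
  have hx : x ∈ D.Lg 0 ⊔ D.Lg 1 := by rw [D.grading_sup]; trivial
  obtain ⟨x0, hx0, x1, hx1, rfl⟩ := Submodule.mem_sup.mp hx
  have h0 := D.skew 0 0 x0 hx0 z hz
  have h1 := D.skew 1 0 x1 hx1 z hz
  have s0 : ssign K (0 : ZMod 2) 0 = 1 := by simp [ssign]
  have s1 : ssign K (1 : ZMod 2) 0 = 1 := by simp [ssign]
  rw [s0, neg_smul, one_smul] at h0
  rw [s1, neg_smul, one_smul] at h1
  simp only [map_add, LinearMap.add_apply, h0, h1]
  abel

lemma bracket_H0_mem {I : Submodule K L} (hI : D.IsIdeal I) {x : L} (hx : x ∈ I)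
    (z : ↥D.H0) : D.bracket (z : L) x ∈ I := by
  rw [D.bracket_swap_Lg0 z.2.2 x]
  exact I.neg_mem (hI.2.1 x hx _)

lemma phi_rootSpace {α : ↥D.H0 →ₗ[K] K} {v : L} (hv : v ∈ D.rootSpace α) :
    D.φ v ∈ D.rootSpace (α ∘ₗ (D.φH0.symm : ↥D.H0 →ₗ[K] ↥D.H0)) := by
  rw [mem_rootSpace_iff]
  intro h0
  have h1 : D.φ ((D.φH0.symm h0 : L)) = (h0 : L) := by
    rw [← D.φH0_coe]
    simp
  have h2 := hv (D.φH0.symm h0)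
  calc D.bracket (h0 : L) (D.φ v)
      = D.bracket (D.φ (D.φH0.symm h0 : L)) (D.φ v) := by rw [h1]
    _ = D.φ (D.bracket (D.φH0.symm h0 : L) v) := (D.φ_bracket _ _).symm
    _ = D.φ (α (D.φH0.symm h0) • D.φ v) := by rw [h2]
    _ = α (D.φH0.symm h0) • D.φ (D.φ v) := by rw [map_smul]
    _ = _ := rfl

lemma stmt18_aux (I : Submodule K L) (hI : D.IsIdeal I) :
    ∀ (n : ℕ) (α : Fin n → (↥D.H0 →ₗ[K] K)), Function.Injective α →
    (∀ j, α j ≠ 0) → ∀ h : L, h ∈ D.H → ∀ v : Fin n → L,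
    (∀ j, v j ∈ D.rootSpace (α j)) → h + ∑ j, v j ∈ I → ∀ j, v j ∈ I := by
  intro n
  induction n with
  | zero => exact fun α _ _ h _ v _ _ j => j.elim0
  | succ n IH =>
    intro α hinj hα0 h hh v hv hx j
    by_cases hone : ∃ i : Fin (n + 1), i ≠ j
    · -- kill component i
      obtain ⟨i, hij⟩ := hone
      have hne : α j - α i ≠ 0 := sub_ne_zero.mpr fun e => hij.symm (hinj e)
      obtain ⟨h₀, hh₀⟩ : ∃ h₀ : ↥D.H0, (α j - α i) h₀ ≠ 0 := by
        by_contra hc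
        push_neg at hc
        exact hne (LinearMap.ext fun z => hc z)
      set x : L := h + ∑ k, v k with hxdef
      have hbr : D.bracket (h₀ : L) x = ∑ k, α k h₀ • D.φ (v k) := by
        rw [hxdef, map_add, map_sum,
          D.H_abelian _ h₀.2.1 h hh, zero_add]
        exact Finset.sum_congr rfl fun k _ => hv k h₀
      have hφx : D.φ x = D.φ h + ∑ k, D.φ (v k) := by
        rw [hxdef, map_add, map_sum]
      set h' : L := -(α i h₀) • D.φ h with hh'def
      set u : Fin (n + 1) → L := fun k => (α k h₀ - α i h₀) • D.φ (v k) with hudef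
      set y : L := D.bracket (h₀ : L) x - α i h₀ • D.φ x with hydef
      have hyI : y ∈ I := by
        refine I.sub_mem (D.bracket_H0_mem hI hx h₀) (I.smul_mem _ ?_)
        exact D.phi_mem_of_mem hI hx
      have hui : u i = 0 := by simp [hudef]
      have hy : y = h' + ∑ k : Fin n, u (i.succAbove k) := by
        have : y = h' + ∑ k, u k := by
          rw [hydef, hbr, hφx, hh'def, hudef]
          simp only [smul_add, Finset.smul_sum, sub_smul]
          rw [Finset.sum_sub_distrib]
          module
        rw [this, Fin.sum_univ_succAbove u i, hui, zero_add]
      set β : Fin n → (↥D.H0 →ₗ[K] K) :=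
        fun k => (α (i.succAbove k)) ∘ₗ (D.φH0.symm : ↥D.H0 →ₗ[K] ↥D.H0) with hβdef
      have hβinj : Function.Injective β := by
        intro a b hab
        have : α (i.succAbove a) = α (i.succAbove b) := by
          ext z
          have := congrArg (fun f : ↥D.H0 →ₗ[K] K => f (D.φH0 z)) hab
          simpa [hβdef] using this
        exact Fin.succAbove_right_injective (hinj this)
      have hβ0 : ∀ k, β k ≠ 0 := by
        intro k hk
        refine hα0 (i.succAbove k) (LinearMap.ext fun z => ?_)
        have := congrArg (fun f : ↥D.H0 →ₗ[K] K => f (D.φH0 z)) hk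
        simpa [hβdef] using this
      have hw : ∀ k : Fin n, u (i.succAbove k) ∈ D.rootSpace (β k) := by
        intro k
        exact (D.rootSpace (β k)).smul_mem _ (D.phi_rootSpace (hv _))
      have hh' : h' ∈ D.H := by
        refine D.H.smul_mem _ ?_
        rw [← D.φ_H]
        exact ⟨h, hh, rfl⟩
      have hres := IH β hβinj hβ0 h' hh' (fun k => u (i.succAbove k)) hw (hy ▸ hyI)
      obtain ⟨k₀, hk₀⟩ := Fin.exists_succAbove_eq hij.symm
      have huj : u j ∈ I := by rw [← hk₀]; exact hres k₀
      have hcne : α j h₀ - α i h₀ ≠ 0 := by simpa using hh₀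
      have : D.φ (v j) ∈ I := by
        have := I.smul_mem (α j h₀ - α i h₀)⁻¹ huj
        rwa [hudef, smul_smul, inv_mul_cancel₀ hcne, one_smul] at this
      exact D.mem_of_phi_mem hI this
    · -- only one component
      push_neg at hone
      obtain ⟨h₀, hh₀⟩ : ∃ h₀ : ↥D.H0, α j h₀ ≠ 0 := by
        by_contra hc
        push_neg at hc
        exact hα0 j (LinearMap.ext fun z => hc z)
      have hsum : ∑ k, v k = v j := by
        rw [Finset.sum_eq_single j]
        · intro b _ hb; exact absurd (hone b) (by simpa using hb)
        · intro hb; exact absurd (Finset.mem_univ j) hb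
      have hbr : D.bracket (h₀ : L) (h + ∑ k, v k) = α j h₀ • D.φ (v j) := by
        rw [map_add, D.H_abelian _ h₀.2.1 h hh, zero_add, hsum]
        exact hv j h₀
      have hbI : α j h₀ • D.φ (v j) ∈ I := hbr ▸ D.bracket_H0_mem hI hx h₀
      have : D.φ (v j) ∈ I := by
        have := I.smul_mem (α j h₀)⁻¹ hbI
        rwa [smul_smul, inv_mul_cancel₀ hh₀, one_smul] at this
      exact D.mem_of_phi_mem hI this

end SplitRegularHomLieSuperalgebra

/-- if `h + Σ_j v_{α_j} ∈ I` for an ideal `I`, with `h ∈ H`,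
`v_{α_j} ∈ L_{α_j}` and the `α_j ∈ Λ` pairwise distinct, then each `v_{α_j} ∈ I`. -/
theorem stmt_18 {K L : Type*} [Field K] [AddCommGroup L] [Module K L]
    (D : SplitRegularHomLieSuperalgebra K L) (hsplit : IsSplitDecomposition D)
    (I : Submodule K L) (hI : D.IsIdeal I)
    (n : ℕ) (h : L) (hh : h ∈ D.H)
    (α : Fin n → (↥D.H0 →ₗ[K] K)) (hαΛ : ∀ j, α j ∈ D.Λ)
    (hdist : Function.Injective α)
    (v : Fin n → L) (hv : ∀ j, v j ∈ D.rootSpace (α j))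
    (hx : h + ∑ j, v j ∈ I) :
    ∀ j, v j ∈ I :=
  D.stmt18_aux I hI n α hdist (fun j => (hαΛ j).1) h hh v hv hx
end
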